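/- Let V be a finite nonempty set, let p and π be probability distributions on V, and let x* be a point attaining the maximum of p. Set q := 1 - p(x*) = 1 - max_{x∈V} p(x). Then for every subset A ⊆ V, one has π(A) - p(A) ≤ sup{ λ ∈ [0,1] : d_kl(λ ‖ q) ≤ D_KL(π ‖ p) }, where the supremum is over all λ in [0,1] satisfying the stated inequality (the set is nonempty since it contains q). -/

import Mathlib

/-!
Splitting `V` into `A` and `Aᶜ` and applying the log-sum inequality on each block gives the
data-processing bound `d_kl(μ(A) ‖ p(A)) ≤ D_KL(μ ‖ p)`. If `μ(A) - p(A) ≤ q` there is nothing to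
prove, since `d_kl(q ‖ q) = 0` makes `q` admissible. Otherwise `x* ∉ A`, so
`p(A) ≤ q ≤ μ(A) - p(A)`; as `d_kl(l ‖ q)` grows when either argument moves away from the other,
`d_kl(μ(A) - p(A) ‖ q) ≤ d_kl(μ(A) ‖ q) ≤ d_kl(μ(A) ‖ p(A))`.
-/

open Real

/-- Termwise KL contribution `p·log(p/q)` with the conventions
`0·log(0/q) = 0`, `0·log(0/0) = 0`, and `b·log(b/0) = +∞` for `b > 0`,
valued in the extended reals `[-∞, ∞]`. -/
noncomputable def klTerm (p q : ℝ) : EReal :=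
  if p = 0 then 0 else if q = 0 then ⊤ else ((p * Real.log (p / q) : ℝ) : EReal)

/-- Binary Kullback–Leibler divergence `d_kl(l ‖ q)` between the two-point
distributions `(l, 1 - l)` and `(q, 1 - q)`. -/
noncomputable def dkl (l q : ℝ) : EReal :=
  klTerm l q + klTerm (1 - l) (1 - q)

/-- Kullback–Leibler divergence `D_KL(μ ‖ p)` between distributions on a finite type. -/
noncomputable def DKL {V : Type*} [Fintype V] (μ p : V → ℝ) : EReal :=
  ∑ x, klTerm (μ x) (p x)

lemma EReal.coe_finset_sum {ι : Type*} (s : Finset ι) (f : ι → ℝ) :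
    ((∑ i ∈ s, f i : ℝ) : EReal) = ∑ i ∈ s, (f i : EReal) :=
  map_sum (⟨⟨Real.toEReal, EReal.coe_zero⟩, EReal.coe_add⟩ : ℝ →+ EReal) f s

lemma Real.sub_le_mul_log_div {x y : ℝ} (hx : 0 ≤ x) (hy : 0 < y) : x - y ≤ x * log (x / y) := by
  rcases hx.eq_or_lt with rfl | hx
  · simp [hy.le]
  · have h := Real.one_sub_inv_le_log_of_pos (div_pos hx hy)
    rw [inv_div] at h
    calc x - y = x * (1 - y / x) := by field_simp
      _ ≤ x * log (x / y) := mul_le_mul_of_nonneg_left h hx.le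

theorem Real.sum_mul_log_div_sum_le {ι : Type*} (s : Finset ι) {f g : ι → ℝ}
    (hf : ∀ i ∈ s, 0 ≤ f i) (hg : ∀ i ∈ s, 0 ≤ g i) (hfg : ∀ i ∈ s, g i = 0 → f i = 0) :
    (∑ i ∈ s, f i) * log ((∑ i ∈ s, f i) / ∑ i ∈ s, g i) ≤ ∑ i ∈ s, f i * log (f i / g i) := by
  rcases (Finset.sum_nonneg hf).eq_or_lt with hF | hF
  · have hf0 := (Finset.sum_eq_zero_iff_of_nonneg hf).1 hF.symm
    rw [← hF, zero_mul, Finset.sum_eq_zero fun i hi => by rw [hf0 i hi, zero_mul]]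
  set F := ∑ i ∈ s, f i
  set G := ∑ i ∈ s, g i
  have hG : 0 < G := by
    refine (Finset.sum_nonneg hg).lt_of_ne fun hG => hF.ne' ?_
    have hg0 := (Finset.sum_eq_zero_iff_of_nonneg hg).1 hG.symm
    exact Finset.sum_eq_zero fun i hi => hfg i hi (hg0 i hi)
  set r := F / G
  have hr : 0 < r := div_pos hF hG
  have pointwise : ∀ i ∈ s, f i - g i * r ≤ f i * log (f i / g i) - f i * log r := by
    intro i hi
    rcases (hf i hi).eq_or_lt with hfi | hfi
    · rw [← hfi]
      simpa using mul_nonneg (hg i hi) hr.le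
    have hgi : 0 < g i := (hg i hi).lt_of_ne fun h => hfi.ne (hfg i hi h.symm).symm
    rw [← mul_sub, ← Real.log_div (div_pos hfi hgi).ne' hr.ne', div_div]
    exact Real.sub_le_mul_log_div hfi.le (mul_pos hgi hr)
  have hsum : ∑ i ∈ s, (f i - g i * r) = 0 := by
    rw [Finset.sum_sub_distrib, ← Finset.sum_mul, mul_div_cancel₀ F hG.ne', sub_self]
  have := Finset.sum_le_sum pointwise
  rw [hsum, Finset.sum_sub_distrib, ← Finset.sum_mul] at this
  linarith

lemma klTerm_ne_bot (a b : ℝ) : klTerm a b ≠ ⊥ := by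
  unfold klTerm
  split_ifs
  · exact EReal.zero_ne_bot
  · exact top_ne_bot
  · exact EReal.coe_ne_bot _

lemma klTerm_eq_coe {a b : ℝ} (h : b = 0 → a = 0) : klTerm a b = ((a * log (a / b) : ℝ) : EReal) := by
  unfold klTerm
  split_ifs with ha hb
  · simp [ha]
  · exact absurd (h hb) ha
  · rfl

lemma klTerm_of_ne_zero_of_eq_zero {a b : ℝ} (ha : a ≠ 0) (hb : b = 0) : klTerm a b = ⊤ := by
  simp [klTerm, ha, hb]

lemma klTerm_self (a : ℝ) : klTerm a a = 0 := by
  rw [klTerm_eq_coe id]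
  rcases eq_or_ne a 0 with rfl | ha
  · simp
  · simp [div_self ha]

lemma klTerm_sum_le {ι : Type*} (s : Finset ι) {f g : ι → ℝ}
    (hf : ∀ i ∈ s, 0 ≤ f i) (hg : ∀ i ∈ s, 0 ≤ g i) :
    klTerm (∑ i ∈ s, f i) (∑ i ∈ s, g i) ≤ ∑ i ∈ s, klTerm (f i) (g i) := by
  classical
  by_cases htop : ∃ i ∈ s, f i ≠ 0 ∧ g i = 0
  · obtain ⟨i, hi, hfi, hgi⟩ := htop
    have hrest : ∑ j ∈ s.erase i, klTerm (f j) (g j) ≠ ⊥ :=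
      Finset.sum_induction _ (· ≠ ⊥) (fun _ _ ha hb => EReal.add_ne_bot_iff.2 ⟨ha, hb⟩)
        EReal.zero_ne_bot fun j _ => klTerm_ne_bot _ _
    refine le_top.trans_eq (Eq.symm ?_)
    rw [← Finset.add_sum_erase s _ hi, klTerm_of_ne_zero_of_eq_zero hfi hgi,
      EReal.top_add_of_ne_bot hrest]
  push Not at htop
  have hfg : ∀ i ∈ s, g i = 0 → f i = 0 := fun i hi => not_imp_not.1 (htop i hi)
  have hFG : ∑ i ∈ s, g i = 0 → ∑ i ∈ s, f i = 0 := fun h =>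
    Finset.sum_eq_zero fun i hi => hfg i hi ((Finset.sum_eq_zero_iff_of_nonneg hg).1 h i hi)
  rw [klTerm_eq_coe hFG, Finset.sum_congr rfl fun i hi => klTerm_eq_coe (hfg i hi),
    ← EReal.coe_finset_sum, EReal.coe_le_coe_iff]
  exact Real.sum_mul_log_div_sum_le s hf hg hfg

lemma Real.mul_log_div_of_ne_zero (x : ℝ) {y : ℝ} (hy : y ≠ 0) :
    x * log (x / y) = x * log x - x * log y := by
  rcases eq_or_ne x 0 with rfl | hx
  · simp
  · rw [Real.log_div hx hy, mul_sub]

noncomputable def dklReal (l q : ℝ) : ℝ := l * log (l / q) + (1 - l) * log ((1 - l) / (1 - q))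

lemma dkl_eq_coe_dklReal (l : ℝ) {q : ℝ} (hq0 : q ≠ 0) (hq1 : q ≠ 1) :
    dkl l q = dklReal l q := by
  rw [dkl, klTerm_eq_coe fun h => absurd h hq0,
    klTerm_eq_coe fun h => absurd h (sub_ne_zero.2 hq1.symm), ← EReal.coe_add, dklReal]

lemma dklReal_eq_neg_binEntropy_sub (l : ℝ) {q : ℝ} (hq0 : q ≠ 0) (hq1 : q ≠ 1) :
    dklReal l q = -binEntropy l - (l * log q + (1 - l) * log (1 - q)) := by
  rw [dklReal, binEntropy, Real.log_inv, Real.log_inv, Real.mul_log_div_of_ne_zero _ hq0,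
    Real.mul_log_div_of_ne_zero _ (sub_ne_zero.2 hq1.symm)]
  ring

lemma monotoneOn_dklReal_left {q : ℝ} (hq0 : 0 < q) (hq1 : q < 1) :
    MonotoneOn (fun l => dklReal l q) (Set.Icc q 1) := by
  simp only [dklReal_eq_neg_binEntropy_sub _ hq0.ne' hq1.ne]
  refine monotoneOn_of_hasDerivWithinAt_nonneg (convex_Icc q 1) (by fun_prop)
    (f' := fun l => (log l - log q) + (log (1 - q) - log (1 - l))) (fun l hl => ?_) fun l hl => ?_
  all_goals rw [interior_Icc] at hl
  · have hl0 : l ≠ 0 := (hq0.trans hl.1).ne'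
    have hl1 : l ≠ 1 := hl.2.ne
    have hlin := ((hasDerivAt_id l).mul_const (log q)).add
      (((hasDerivAt_id l).const_sub 1).mul_const (log (1 - q)))
    exact (((Real.hasDerivAt_binEntropy hl0 hl1).neg.sub hlin).congr_deriv (by ring)).hasDerivWithinAt
  · have := Real.log_le_log hq0 hl.1.le
    have := Real.log_le_log (sub_pos.2 hl.2) (by linarith [hl.1] : 1 - l ≤ 1 - q)
    linarith

/-- Both bounds come from `x - y ≤ x log (x / y)`, which gives
`(1 - a) log ((1 - b) / (1 - q)) ≤ q - b ≤ a log (q / b)`. -/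
lemma dklReal_le_dklReal_right {a b q : ℝ} (hb : 0 < b) (hbq : b ≤ q) (hqa : q ≤ a)
    (hq1 : q < 1) : dklReal a q ≤ dklReal a b := by
  have hq1' : 0 < 1 - q := sub_pos.2 hq1
  have hb1 : 0 < 1 - b := by linarith
  have hqb : q - b ≤ a * log (q / b) :=
    (Real.sub_le_mul_log_div (hb.le.trans hbq) hb).trans
      (mul_le_mul_of_nonneg_right hqa (Real.log_nonneg ((one_le_div hb).2 hbq)))
  have hqb' : (1 - a) * log ((1 - b) / (1 - q)) ≤ q - b := by
    have h := Real.sub_le_mul_log_div hq1'.le hb1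
    rw [← inv_div, Real.log_inv] at h
    have := mul_le_mul_of_nonneg_right (by linarith : 1 - a ≤ 1 - q)
      (Real.log_nonneg ((one_le_div hq1').2 (by linarith : 1 - q ≤ 1 - b)))
    linarith
  rw [Real.log_div (hb.trans_le hbq).ne' hb.ne'] at hqb
  rw [Real.log_div hb1.ne' hq1'.ne'] at hqb'
  simp only [dklReal, Real.mul_log_div_of_ne_zero _ (hb.trans_le hbq).ne',
    Real.mul_log_div_of_ne_zero _ hb.ne', Real.mul_log_div_of_ne_zero _ hq1'.ne',
    Real.mul_log_div_of_ne_zero _ hb1.ne']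
  linarith

lemma dkl_sub_le_dkl {a b q : ℝ} (hb : 0 ≤ b) (hbq : b ≤ q) (hqa : q ≤ a - b) (ha : a ≤ 1) :
    dkl (a - b) q ≤ dkl a b := by
  rcases hb.eq_or_lt with rfl | hb
  · rw [sub_zero] at hqa ⊢
    rcases eq_or_ne a 0 with rfl | ha0
    · rw [le_antisymm hqa hbq]
    · refine le_top.trans_eq (Eq.symm ?_)
      rw [dkl, klTerm_of_ne_zero_of_eq_zero ha0 rfl, EReal.top_add_of_ne_bot (klTerm_ne_bot _ _)]
  have hq0 : 0 < q := hb.trans_le hbq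
  have hq1 : q < 1 := by linarith
  rw [dkl_eq_coe_dklReal _ hq0.ne' hq1.ne, dkl_eq_coe_dklReal _ hb.ne' (by linarith),
    EReal.coe_le_coe_iff]
  calc dklReal (a - b) q ≤ dklReal a q :=
        monotoneOn_dklReal_left hq0 hq1 ⟨hqa, by linarith⟩ ⟨by linarith, ha⟩ (by linarith)
    _ ≤ dklReal a b := dklReal_le_dklReal_right hb hbq (by linarith) hq1

lemma dkl_self (q : ℝ) : dkl q q = 0 := by
  rw [dkl, klTerm_self, klTerm_self, add_zero]

section Distributions

variable {V : Type*} [Fintype V] {μ p : V → ℝ}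

lemma DKL_nonneg (hμ0 : ∀ x, 0 ≤ μ x) (hp0 : ∀ x, 0 ≤ p x)
    (hμsum : ∑ x, μ x = 1) (hpsum : ∑ x, p x = 1) : 0 ≤ DKL μ p := by
  have h := klTerm_sum_le Finset.univ (fun x _ => hμ0 x) (fun x _ => hp0 x)
  rwa [hμsum, hpsum, klTerm_self] at h

lemma dkl_sum_le_DKL (hμ0 : ∀ x, 0 ≤ μ x) (hp0 : ∀ x, 0 ≤ p x)
    (hμsum : ∑ x, μ x = 1) (hpsum : ∑ x, p x = 1) (A : Finset V) :
    dkl (∑ x ∈ A, μ x) (∑ x ∈ A, p x) ≤ DKL μ p := by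
  classical
  have hA := klTerm_sum_le A (fun x _ => hμ0 x) (fun x _ => hp0 x)
  have hAc := klTerm_sum_le Aᶜ (fun x _ => hμ0 x) (fun x _ => hp0 x)
  have hμc : ∑ x ∈ Aᶜ, μ x = 1 - ∑ x ∈ A, μ x := by
    rw [← hμsum, ← Finset.sum_add_sum_compl A μ, add_sub_cancel_left]
  have hpc : ∑ x ∈ Aᶜ, p x = 1 - ∑ x ∈ A, p x := by
    rw [← hpsum, ← Finset.sum_add_sum_compl A p, add_sub_cancel_left]
  rw [hμc, hpc] at hAc
  rw [dkl, DKL, ← Finset.sum_add_sum_compl A]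
  exact add_le_add hA hAc

end Distributions

theorem capacity_bound_general {V : Type*} [Fintype V]
    (p μ : V → ℝ)
    (hp0 : ∀ x, 0 ≤ p x) (hp1 : ∀ x, p x ≤ 1) (hpsum : ∑ x, p x = 1)
    (hμ0 : ∀ x, 0 ≤ μ x) (hμsum : ∑ x, μ x = 1)
    (xstar : V)
    (A : Finset V) :
    (∑ x ∈ A, μ x) - (∑ x ∈ A, p x) ≤
      sSup {l : ℝ | l ∈ Set.Icc (0 : ℝ) 1 ∧ dkl l (1 - p xstar) ≤ DKL μ p} := by
  set q := 1 - p xstar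
  set a := ∑ x ∈ A, μ x
  set b := ∑ x ∈ A, p x
  have hbdd : BddAbove {l : ℝ | l ∈ Set.Icc (0 : ℝ) 1 ∧ dkl l q ≤ DKL μ p} :=
    ⟨1, fun l hl => hl.1.2⟩
  have hq : q ∈ Set.Icc (0 : ℝ) 1 := ⟨by linarith [hp1 xstar], by linarith [hp0 xstar]⟩
  rcases le_or_gt (a - b) q with hle | hlt
  · exact hle.trans (le_csSup hbdd ⟨hq, (dkl_self q).symm ▸ DKL_nonneg hμ0 hp0 hμsum hpsum⟩)
  have ha1 : a ≤ 1 := hμsum ▸ Finset.sum_le_univ_sum_of_nonneg hμ0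
  have hbq : b ≤ q := by
    classical
    have hxA : xstar ∉ A := fun hx => by
      linarith [Finset.single_le_sum (fun x _ => hp0 x) hx]
    have := Finset.sum_le_univ_sum_of_nonneg (s := insert xstar A) hp0
    rw [Finset.sum_insert hxA, hpsum] at this
    linarith
  have hb0 : 0 ≤ b := Finset.sum_nonneg fun x _ => hp0 x
  refine le_csSup hbdd ⟨⟨by linarith [hq.1], by linarith⟩, ?_⟩
  exact (dkl_sub_le_dkl hb0 hbq hlt.le ha1).trans (dkl_sum_le_DKL hμ0 hp0 hμsum hpsum A)

/-- capacity bound. For probability distributions `p, μ` on a finite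
nonempty set `V`, with `x*` attaining the maximum of `p` and `q := 1 - p x*`, for
every `A ⊆ V` one has `μ(A) - p(A) ≤ sup {λ ∈ [0,1] : d_kl(λ‖q) ≤ D_KL(μ‖p)}`. -/
theorem capacity_bound {V : Type*} [Fintype V] [Nonempty V]
    (p μ : V → ℝ)
    (hp0 : ∀ x, 0 ≤ p x) (hp1 : ∀ x, p x ≤ 1) (hpsum : ∑ x, p x = 1)
    (hμ0 : ∀ x, 0 ≤ μ x) (hμ1 : ∀ x, μ x ≤ 1) (hμsum : ∑ x, μ x = 1)
    (xstar : V) (hxstar : ∀ x, p x ≤ p xstar)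
    (A : Finset V) :
    (∑ x ∈ A, μ x) - (∑ x ∈ A, p x) ≤
      sSup {l : ℝ | l ∈ Set.Icc (0 : ℝ) 1 ∧ dkl l (1 - p xstar) ≤ DKL μ p} :=
  capacity_bound_general p μ hp0 hp1 hpsum hμ0 hμsum xstar A
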